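/- arXiv:2101.05169 — 2 statements merged into one kernel-verified Lean document; each statement's English description precedes it below -/
import Mathlib

section
/- Let y and z be integers with y > z ≥ 1 and gcd(y,z) = 1, and let −y/z = [a₀, a₁, …, aₙ] be the negative continued fraction expansion with all aᵢ ≤ −2 (i.e., −y/z = a₀ − 1/(a₁ − 1/(⋯ − 1/aₙ))). Define −y′/z′ = [a₀, …, aₙ₋₁] and −y″/z″ = [a₀, …, aₙ₋₁ + 1] (with y′, y″ ≥ 0, written in lowest terms). Then y = y′ + y″ and z = z′ + z″. -/
/-!
Write `[a₀, …, aₙ] = -Y/Z` with `(Y, Z)(a :: l) = (-a Y(l) - Z(l), Y(l))`, started at `(1, 0)`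
for the empty list (the product of the matrices `[[-a, -1], [1, 0]]`). The pair is affine in the
last entry `aₙ` with slope `-(Y, Z)([a₀, …, aₙ₋₁])`, which is the identity
`(y, z) = (y', z') + (y'', z'')`. It remains to see that `(Y, Z)` is the reduced representation of
the value: its determinant is `±1`, and `1 ≤ Z ≤ Y` as long as all entries are `≤ -2` except
possibly the last one, which is `≤ -1`.
-/

/-- The value of a negative (Hirzebruch–Jung) continued fraction
`[a₀, …, aₙ] = a₀ − 1/(a₁ − 1/(⋯ − 1/aₙ))`. -/
def ncf : List ℤ → ℚ
  | [] => 0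
  | [a] => (a : ℚ)
  | a :: l => (a : ℚ) - 1 / ncf l

def ncfFrac : List ℤ → ℤ × ℤ
  | [] => (1, 0)
  | a :: l => (-a * (ncfFrac l).1 - (ncfFrac l).2, (ncfFrac l).1)

theorem ncfFrac_append_add (l : List ℤ) (b c : ℤ) :
    ncfFrac (l ++ [b + c]) = ncfFrac (l ++ [b]) - c • ncfFrac l := by
  induction l with
  | nil =>
    simp only [List.nil_append, ncfFrac, Prod.smul_mk, Prod.mk_sub_mk]
    congr 1 <;> ring
  | cons a t ih =>
    simp only [List.cons_append, ncfFrac, ih, Prod.fst_sub, Prod.snd_sub, Prod.smul_fst,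
      Prod.smul_snd, Prod.smul_mk, Prod.mk_sub_mk]
    congr 1
    ring

theorem isCoprime_ncfFrac : ∀ l : List ℤ, IsCoprime (ncfFrac l).1 (ncfFrac l).2
  | [] => isCoprime_one_left
  | a :: l => by
    have h := (isCoprime_ncfFrac l).symm.neg_left.add_mul_left_left (-a)
    rwa [show -(ncfFrac l).2 + (ncfFrac l).1 * -a = -a * (ncfFrac l).1 - (ncfFrac l).2 by ring]
      at h

section

variable {l : List ℤ} {b : ℤ}

theorem one_le_ncfFrac_snd_le_fst (hl : ∀ a ∈ l, a ≤ -2) (hb : b ≤ -1) :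
    1 ≤ (ncfFrac (l ++ [b])).2 ∧ (ncfFrac (l ++ [b])).2 ≤ (ncfFrac (l ++ [b])).1 := by
  induction l with
  | nil =>
    simp only [List.nil_append, ncfFrac]
    omega
  | cons a t ih =>
    obtain ⟨hZ, hZY⟩ := ih fun x hx => hl x (List.mem_cons_of_mem a hx)
    have ha : a ≤ -2 := hl a List.mem_cons_self
    simp only [List.cons_append, ncfFrac]
    constructor <;> nlinarith

theorem ncf_append_singleton (hl : ∀ a ∈ l, a ≤ -2) (hb : b ≤ -1) :
    ncf (l ++ [b]) = -((ncfFrac (l ++ [b])).1 : ℚ) / (ncfFrac (l ++ [b])).2 := by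
  induction l with
  | nil => simp [ncf, ncfFrac]
  | cons a t ih =>
    have ht : ∀ x ∈ t, x ≤ -2 := fun x hx => hl x (List.mem_cons_of_mem a hx)
    obtain ⟨hZ, hZY⟩ := one_le_ncfFrac_snd_le_fst ht hb
    have hY : ((ncfFrac (t ++ [b])).1 : ℚ) ≠ 0 := Int.cast_ne_zero.mpr (by omega)
    rw [List.cons_append, ncfFrac, ncf.eq_3 a _ (by simp), ih ht]
    field_simp
    push_cast
    ring

theorem ncfFrac_eq_of_ncf_eq (hl : ∀ a ∈ l, a ≤ -2) (hb : b ≤ -1) {y z : ℤ} (hz : 1 ≤ z)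
    (hcop : IsCoprime y z) (h : ncf (l ++ [b]) = -(y : ℚ) / z) : ncfFrac (l ++ [b]) = (y, z) := by
  have hfrac := isCoprime_ncfFrac (l ++ [b])
  rw [Int.isCoprime_iff_gcd_eq_one] at hcop hfrac
  rw [ncf_append_singleton hl hb, neg_div, neg_div, neg_inj] at h
  obtain ⟨hY, hZ⟩ := Rat.div_int_inj (by linarith [(one_le_ncfFrac_snd_le_fst hl hb).1])
    (by omega) hfrac hcop h
  exact Prod.ext hY hZ

end

theorem stmt5_general (L : List ℤ) (hL : L ≠ []) (hlen : 2 ≤ L.length)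
    (hle : ∀ a ∈ L, a ≤ -2)
    (y z y' z' y'' z'' : ℤ)
    (hz : z ≥ 1) (hcop : IsCoprime y z)
    (hval : ncf L = -(y : ℚ) / (z : ℚ))
    (hz' : z' ≥ 1) (hcop' : IsCoprime y' z')
    (hval' : ncf L.dropLast = -(y' : ℚ) / (z' : ℚ))
    (hz'' : z'' ≥ 1) (hcop'' : IsCoprime y'' z'')
    (hval'' : ncf (L.dropLast ++ [L.getLast hL + 1]) = -(y'' : ℚ) / (z'' : ℚ)) :
    y = y' + y'' ∧ z = z' + z'' := by
  set d := L.dropLast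
  set b := L.getLast hL
  have hd : ∀ a ∈ d, a ≤ -2 := fun a ha => hle a (List.dropLast_subset L ha)
  have hb : b ≤ -2 := hle b (L.getLast_mem hL)
  have hdne : d ≠ [] := List.ne_nil_of_length_pos (by
    simp only [d, List.length_dropLast]
    omega)
  have hL_eq : L = d ++ [b] := (List.dropLast_append_getLast hL).symm
  have hd_eq : d = d.dropLast ++ [d.getLast hdne] := (List.dropLast_append_getLast hdne).symm
  have hfrac : ncfFrac L = (y, z) := by
    rw [hL_eq] at hval ⊢
    exact ncfFrac_eq_of_ncf_eq hd (by omega) hz hcop hval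
  have hfrac' : ncfFrac d = (y', z') := by
    rw [hd_eq] at hval' ⊢
    exact ncfFrac_eq_of_ncf_eq (fun a ha => hd a (List.dropLast_subset d ha))
      (by linarith [hd _ (d.getLast_mem hdne)]) hz' hcop' hval'
  have hfrac'' : ncfFrac (d ++ [b + 1]) = (y'', z'') :=
    ncfFrac_eq_of_ncf_eq hd (by omega) hz'' hcop'' hval''
  rw [ncfFrac_append_add, ← hL_eq, hfrac, hfrac', one_smul, sub_eq_iff_eq_add',
    Prod.mk_add_mk, Prod.mk.injEq] at hfrac''
  exact hfrac''

/-- If `−y/z = [a₀, …, aₙ]` with all `aᵢ ≤ −2`, `y > z ≥ 1` coprime, and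
`−y′/z′ = [a₀, …, aₙ₋₁]`, `−y″/z″ = [a₀, …, aₙ₋₁, aₙ + 1]` (lowest terms,
nonnegative numerators), then `y = y′ + y″` and `z = z′ + z″`. -/
theorem stmt5 (L : List ℤ) (hL : L ≠ []) (hlen : 2 ≤ L.length)
    (hle : ∀ a ∈ L, a ≤ -2)
    (y z y' z' y'' z'' : ℤ)
    (hyz : y > z) (hz : z ≥ 1) (hcop : IsCoprime y z)
    (hval : ncf L = -(y : ℚ) / (z : ℚ))
    (hy' : y' ≥ 0) (hz' : z' ≥ 1) (hcop' : IsCoprime y' z')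
    (hval' : ncf L.dropLast = -(y' : ℚ) / (z' : ℚ))
    (hy'' : y'' ≥ 0) (hz'' : z'' ≥ 1) (hcop'' : IsCoprime y'' z'')
    (hval'' : ncf (L.dropLast ++ [L.getLast hL + 1]) = -(y'' : ℚ) / (z'' : ℚ)) :
    y = y' + y'' ∧ z = z' + z'' :=
  stmt5_general L hL hlen hle y z y' z' y'' z'' hz hcop hval hz' hcop' hval' hz'' hcop'' hval''
end

section
/- Fox derivatives on a free group: let F be the free group on generators x₁, …, xₙ and fix i. There is a unique map ∂/∂xᵢ : F → Z[F] from F to the integral group ring satisfying ∂xⱼ/∂xᵢ = δᵢⱼ and the product rule ∂(uv)/∂xᵢ = ∂u/∂xᵢ + u·∂v/∂xᵢ for all u, v ∈ F. Moreover, this map satisfies ∂(u⁻¹)/∂xᵢ = −u⁻¹·∂u/∂xᵢ and the fundamental identity w − 1 = Σᵢ (∂w/∂xᵢ)(xᵢ − 1) for all w ∈ F. -/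
/-!
A map `D : G → ℤ[G]` satisfies the product rule `D (u * v) = D u + u * D v` exactly when
`g ↦ (D g, g)` is a homomorphism into the semidirect product `ℤ[G] ⋊ G`, with `G` acting on
`ℤ[G]` by left multiplication. For `G` free, such homomorphisms are prescribed freely and
uniquely on the generators, which gives existence and uniqueness of the Fox derivatives.
The inverse formula is the product rule applied to `u⁻¹ * u = 1`. For the fundamental identity,
both `w ↦ w - 1` and `w ↦ ∑ i, ∂w/∂xᵢ * (xᵢ - 1)` obey the product rule and agree on the
generators, hence coincide.
-/

open MonoidAlgebra

section FoxDerivation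

variable {k G : Type*} [Ring k] [Group G]

def IsFoxDerivation (D : G → MonoidAlgebra k G) : Prop :=
  ∀ u v, D (u * v) = D u + of k G u * D v

namespace IsFoxDerivation

theorem map_one {D : G → MonoidAlgebra k G} (hD : IsFoxDerivation D) : D 1 = 0 := by
  have h := hD 1 1
  rwa [mul_one, _root_.map_one, one_mul, left_eq_add] at h

theorem map_inv {D : G → MonoidAlgebra k G} (hD : IsFoxDerivation D) (u : G) :
    D u⁻¹ = -(of k G u⁻¹ * D u) := by
  have h := hD u⁻¹ u
  rwa [inv_mul_cancel, hD.map_one, eq_comm, ← eq_neg_iff_add_eq_zero] at h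

theorem sum_mul {ι : Type*} (s : Finset ι) {D : ι → G → MonoidAlgebra k G}
    (hD : ∀ i ∈ s, IsFoxDerivation (D i)) (c : ι → MonoidAlgebra k G) :
    IsFoxDerivation fun g => ∑ i ∈ s, D i g * c i := by
  intro u v
  rw [Finset.mul_sum, ← Finset.sum_add_distrib]
  refine Finset.sum_congr rfl fun i hi => ?_
  rw [hD i hi, add_mul, mul_assoc]

end IsFoxDerivation

theorem isFoxDerivation_of_sub_one : IsFoxDerivation fun g : G => of k G g - 1 := by
  intro u v
  dsimp only
  rw [map_mul, mul_sub, mul_one]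
  abel

variable (k G) in
noncomputable def foxAction : G →* MulAut (Multiplicative (MonoidAlgebra k G)) :=
  (MulAutMultiplicative _).symm.toMonoidHom.comp <|
    AddAut.mulLeft.comp <| (Units.map (of k G)).comp toUnits.toMonoidHom

theorem foxAction_apply (g : G) (x : Multiplicative (MonoidAlgebra k G)) :
    foxAction k G g x = .ofAdd (of k G g * x.toAdd) :=
  rfl

variable (k G) in
abbrev FoxGroup := Multiplicative (MonoidAlgebra k G) ⋊[foxAction k G] G

namespace IsFoxDerivation

noncomputable def toFoxGroup {D : G → MonoidAlgebra k G} (hD : IsFoxDerivation D) :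
    G →* FoxGroup k G where
  toFun g := ⟨.ofAdd (D g), g⟩
  map_one' := SemidirectProduct.ext hD.map_one rfl
  map_mul' u v := SemidirectProduct.ext (hD u v) rfl

theorem freeGroup_ext {α : Type*} {D E : FreeGroup α → MonoidAlgebra k (FreeGroup α)}
    (hD : IsFoxDerivation D) (hE : IsFoxDerivation E) (h : ∀ a, D (.of a) = E (.of a)) :
    D = E := by
  have hom_eq : hD.toFoxGroup = hE.toFoxGroup :=
    FreeGroup.ext_hom _ _ fun a => SemidirectProduct.ext (congrArg Multiplicative.ofAdd (h a)) rfl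
  funext w
  exact congrArg (fun f : FreeGroup α →* FoxGroup k (FreeGroup α) => (f w).left.toAdd) hom_eq

theorem of_sub_one_eq_sum {α : Type*} [Fintype α] [DecidableEq α]
    {D : α → FreeGroup α → MonoidAlgebra k (FreeGroup α)} (hD : ∀ i, IsFoxDerivation (D i))
    (hof : ∀ i j, D i (.of j) = if i = j then 1 else 0) (w : FreeGroup α) :
    of k _ w - 1 = ∑ i, D i w * (of k _ (.of i) - 1) := by
  refine congrFun (isFoxDerivation_of_sub_one.freeGroup_ext
    (sum_mul _ (fun i _ => hD i) _) fun j => ?_) w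
  simp [hof]

end IsFoxDerivation

theorem exists_isFoxDerivation_freeGroup {α : Type*} (f : α → MonoidAlgebra k (FreeGroup α)) :
    ∃ D, IsFoxDerivation D ∧ ∀ a, D (.of a) = f a := by
  set φ : FreeGroup α →* FoxGroup k (FreeGroup α) :=
    FreeGroup.lift fun a => ⟨.ofAdd (f a), .of a⟩
  have right_φ : SemidirectProduct.rightHom.comp φ = .id _ :=
    FreeGroup.ext_hom _ _ fun a => by simp [φ]
  have right_φ_apply (w : FreeGroup α) : (φ w).right = w := DFunLike.congr_fun right_φ w
  refine ⟨fun w => (φ w).left.toAdd, fun u v => ?_, fun a => by simp [φ]⟩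
  simp only [map_mul, SemidirectProduct.mul_left, right_φ_apply, foxAction_apply, toAdd_mul,
    toAdd_ofAdd]

end FoxDerivation

/-- Fox derivatives on the free group `F` on `x₁, …, xₙ`: there is a unique family of maps
`∂/∂xᵢ : F → ℤ[F]` satisfying `∂xⱼ/∂xᵢ = δᵢⱼ` and the product rule
`∂(uv)/∂xᵢ = ∂u/∂xᵢ + u·∂v/∂xᵢ`. Moreover any such family satisfies
`∂(u⁻¹)/∂xᵢ = −u⁻¹·∂u/∂xᵢ` and the fundamental identity
`w − 1 = Σᵢ (∂w/∂xᵢ)(xᵢ − 1)`. -/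
theorem stmt9 (n : ℕ) :
    (∃! D : Fin n → FreeGroup (Fin n) → MonoidAlgebra ℤ (FreeGroup (Fin n)),
      (∀ i j : Fin n, D i (FreeGroup.of j) =
        if i = j then (1 : MonoidAlgebra ℤ (FreeGroup (Fin n))) else 0) ∧
      (∀ (i : Fin n) (u v : FreeGroup (Fin n)),
        D i (u * v) = D i u + MonoidAlgebra.of ℤ (FreeGroup (Fin n)) u * D i v)) ∧
    (∀ D : Fin n → FreeGroup (Fin n) → MonoidAlgebra ℤ (FreeGroup (Fin n)),
      ((∀ i j : Fin n, D i (FreeGroup.of j) =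
        if i = j then (1 : MonoidAlgebra ℤ (FreeGroup (Fin n))) else 0) ∧
       (∀ (i : Fin n) (u v : FreeGroup (Fin n)),
        D i (u * v) = D i u + MonoidAlgebra.of ℤ (FreeGroup (Fin n)) u * D i v)) →
      (∀ (i : Fin n) (u : FreeGroup (Fin n)),
        D i u⁻¹ = -(MonoidAlgebra.of ℤ (FreeGroup (Fin n)) u⁻¹ * D i u)) ∧
      (∀ w : FreeGroup (Fin n),
        MonoidAlgebra.of ℤ (FreeGroup (Fin n)) w - 1 =
          ∑ i : Fin n, D i w * (MonoidAlgebra.of ℤ (FreeGroup (Fin n)) (FreeGroup.of i) - 1))) := by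
  constructor
  · choose D hD hof using fun i : Fin n =>
      exists_isFoxDerivation_freeGroup (k := ℤ) fun j => if i = j then 1 else 0
    refine ⟨D, ⟨hof, hD⟩, fun E ⟨hEof, hE⟩ => funext fun i => ?_⟩
    exact IsFoxDerivation.freeGroup_ext (hE i) (hD i) fun j => by rw [hEof, hof]
  · rintro D ⟨hof, hD⟩
    exact ⟨fun i => IsFoxDerivation.map_inv (hD i), IsFoxDerivation.of_sub_one_eq_sum hD hof⟩
end
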